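/- arXiv:2105.07684 — 3 statements merged into one kernel-verified Lean document; each statement's English description precedes it below -/
import Mathlib

section
/- (Pierce's Lemma.) For every dimension d ≥ 1 and all p, η > 0 there exists a finite constant κ_{d,p,η} such that for every ℝ^d-valued random vector X on any probability space and every N ≥ 1: e_{p,N}(X) ≤ κ_{d,p,η} · σ_{p+η}(X) · N^{−1/d}. -/
open MeasureTheory Real

noncomputable section

abbrev Euc (d : ℕ) : Type := EuclideanSpace ℝ (Fin d)

/-- L^p quantization error of a random vector `X` w.r.t. a grid `Γ`:
`e_p(Γ,X) = (E[dist(X,Γ)^p])^{1/p}`. -/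
def quantErrRV (p : ℝ) {Ω : Type*} [MeasurableSpace Ω] (P : Measure Ω) {d : ℕ}
    (X : Ω → Euc d) (Γ : Finset (Euc d)) : ℝ :=
  (∫ ω, (Metric.infDist (X ω) (Γ : Set (Euc d))) ^ p ∂P) ^ (1 / p)

/-- Optimal L^p quantization error at level `N`:
`e_{p,N}(X) = inf {e_p(Γ,X) : Γ nonempty finite, card Γ ≤ N}`. -/
def optQuantErrRV (p : ℝ) (N : ℕ) {Ω : Type*} [MeasurableSpace Ω] (P : Measure Ω) {d : ℕ}
    (X : Ω → Euc d) : ℝ :=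
  sInf {e | ∃ Γ : Finset (Euc d), Γ.Nonempty ∧ Γ.card ≤ N ∧ e = quantErrRV p P X Γ}

/-- `σ_p(X) = inf_{a∈ℝ^d} (E|X−a|^p)^{1/p}`, the L^p pseudo-standard deviation. -/
def sigmaRV (p : ℝ) {Ω : Type*} [MeasurableSpace Ω] (P : Measure Ω) {d : ℕ}
    (X : Ω → Euc d) : ℝ :=
  ⨅ a : Euc d, (∫ ω, ‖X ω - a‖ ^ p ∂P) ^ (1 / p)

/-!
Take `τ = η / p` and `R` with `R ^ τ = 2`. On the line, putting a uniform grid of about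
`n / 2 ^ k` points on each shell `[-R ^ k, R ^ k]`, `k ≤ n`, gives `O(n)` points which approximate
every `t` within `O((1 + |t| ^ (1 + τ)) / n)`; points with `|t| > R ^ n` are already that close
to `0`. The product of `d` such grids has `O(n ^ d)` points and approximates `z` within
`O((1 + ‖z‖ ^ (1 + τ)) / n)`. Moving this grid to `a` and scaling it by the `L^(p + η)` norm `M`
of `X - a` costs error `O(M / n)` in `L^p`, because `(‖z‖ ^ (1 + τ)) ^ p = ‖z‖ ^ (p + η)` has
mean at most `1` for `z = (X - a) / M`. With `n ≈ N ^ (1 / d)` and an infimum over `a` this is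
the claimed bound.
-/

open Finset

def uniformGrid (h : ℝ) (m : ℕ) : Finset ℝ :=
  (Icc (-(m : ℤ)) m).image fun i : ℤ => h * i

lemma card_uniformGrid_le (h : ℝ) (m : ℕ) : (uniformGrid h m).card ≤ 2 * m + 1 := by
  refine card_image_le.trans ?_
  rw [Int.card_Icc]
  omega

lemma zero_mem_uniformGrid (h : ℝ) (m : ℕ) : 0 ∈ uniformGrid h m :=
  mem_image.2 ⟨0, by simp, by simp⟩

lemma exists_mem_uniformGrid_abs_sub_le {h t : ℝ} {m : ℕ} (hh : 0 < h) (ht : |t| ≤ h * m) :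
    ∃ x ∈ uniformGrid h m, |t - x| ≤ h := by
  have hth : |t / h| ≤ m := by rwa [abs_div, abs_of_pos hh, div_le_iff₀' hh]
  refine ⟨h * ⌊t / h⌋, mem_image.2 ⟨⌊t / h⌋, mem_Icc.2 ⟨?_, ?_⟩, rfl⟩, ?_⟩
  · exact Int.le_floor.2 (by push_cast; linarith [neg_abs_le (t / h)])
  · exact Int.cast_le.1 ((Int.floor_le _).trans (by push_cast; linarith [le_abs_self (t / h)]))
  · have : t - h * ⌊t / h⌋ = h * Int.fract (t / h) := by
      rw [Int.fract, mul_sub, mul_div_cancel₀ _ hh.ne']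
    rw [this, abs_of_nonneg (mul_nonneg hh.le (Int.fract_nonneg _))]
    exact mul_le_of_le_one_right hh.le (Int.fract_lt_one _).le

def dyadicGrid (R : ℝ) (n : ℕ) : Finset ℝ :=
  (range (n + 1)).biUnion fun k => uniformGrid (R ^ k / (n / 2 ^ k + 1 : ℕ)) (n / 2 ^ k + 1)

lemma card_dyadicGrid_le (R : ℝ) {n : ℕ} (hn : 1 ≤ n) : (dyadicGrid R n).card ≤ 10 * n := by
  calc (dyadicGrid R n).card ≤ ∑ k ∈ range (n + 1), (2 * (n / 2 ^ k + 1) + 1) :=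
        card_biUnion_le.trans (sum_le_sum fun k _ => card_uniformGrid_le _ _)
    _ = 2 * ∑ k ∈ range (n + 1), n / 2 ^ k + 3 * (n + 1) := by
        simp only [mul_add, sum_add_distrib, mul_sum, sum_const, card_range, smul_eq_mul]
        ring
    _ ≤ 10 * n := by
        have := Nat.geom_sum_le le_rfl n (n + 1)
        omega

lemma exists_mem_dyadicGrid_of_abs_le_pow {R t : ℝ} {n k : ℕ} (hR : 0 < R) (hn : 1 ≤ n)
    (hk : k ≤ n) (ht : |t| ≤ R ^ k) :
    ∃ x ∈ dyadicGrid R n, |t - x| ≤ (2 * R) ^ k / n := by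
  set m := n / 2 ^ k + 1
  have hm : (0 : ℝ) < m := by positivity
  have hnm : (n : ℝ) ≤ 2 ^ k * m := by exact_mod_cast (Nat.lt_mul_div_succ n (by positivity)).le
  obtain ⟨x, hx, htx⟩ := exists_mem_uniformGrid_abs_sub_le (h := R ^ k / m) (m := m)
    (by positivity) (by rwa [div_mul_cancel₀ _ hm.ne'])
  refine ⟨x, mem_biUnion.2 ⟨k, mem_range.2 (by omega), hx⟩, htx.trans ?_⟩
  rw [mul_pow, div_le_div_iff₀ hm (by positivity)]
  nlinarith [pow_pos hR k]

lemma pow_rpow_one_add {R τ : ℝ} (hR : 0 < R) (hRτ : R ^ τ = 2) (k : ℕ) :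
    (R ^ k) ^ (1 + τ) = (2 * R) ^ k := by
  rw [Real.rpow_add (by positivity), Real.rpow_one, ← Real.rpow_pow_comm hR.le, hRτ,
    mul_pow, mul_comm]

lemma exists_mem_dyadicGrid_abs_sub_le {R τ : ℝ} {n : ℕ} (hR : 1 < R) (hRτ : R ^ τ = 2)
    (hn : 1 ≤ n) (t : ℝ) :
    ∃ x ∈ dyadicGrid R n, |t - x| ≤ 2 * R / n * (1 + |t| ^ (1 + τ)) := by
  have hR0 : 0 < R := zero_lt_one.trans hR
  have hτ : 0 ≤ τ := by
    by_contra! hτ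
    linarith [Real.rpow_lt_one_of_one_lt_of_neg hR hτ]
  have hn0 : (0 : ℝ) < n := by exact_mod_cast hn
  have shell : ∀ k ≤ n, |t| ≤ R ^ k →
      ∃ x ∈ dyadicGrid R n, |t - x| ≤ 2 * R / n * (1 + |t| ^ (1 + τ)) := by
    intro k
    induction k with
    | zero =>
      intro _ ht
      obtain ⟨x, hx, htx⟩ := exists_mem_dyadicGrid_of_abs_le_pow hR0 hn (Nat.zero_le _) ht
      refine ⟨x, hx, htx.trans ?_⟩
      calc (2 * R) ^ 0 / n = 1 / n * 1 := by ring
        _ ≤ 1 / n * (2 * R * (1 + |t| ^ (1 + τ))) := by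
          gcongr; nlinarith [Real.rpow_nonneg (abs_nonneg t) (1 + τ)]
        _ = _ := by ring
    | succ k ih =>
      intro hk ht
      by_cases htk : |t| ≤ R ^ k
      · exact ih (by omega) htk
      obtain ⟨x, hx, htx⟩ := exists_mem_dyadicGrid_of_abs_le_pow hR0 hn hk ht
      refine ⟨x, hx, htx.trans ?_⟩
      calc (2 * R) ^ (k + 1) / n = 2 * R / n * (R ^ k) ^ (1 + τ) := by
            rw [pow_rpow_one_add hR0 hRτ, pow_succ]; ring
        _ ≤ 2 * R / n * (1 + |t| ^ (1 + τ)) := by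
            gcongr
            linarith [Real.rpow_le_rpow (by positivity) (not_le.1 htk).le (by linarith : 0 ≤ 1 + τ)]
  by_cases ht : |t| ≤ R ^ n
  · exact shell n le_rfl ht
  refine ⟨0, mem_biUnion.2 ⟨0, by simp, zero_mem_uniformGrid _ _⟩, ?_⟩
  have ht0 : 0 < |t| := (pow_pos hR0 n).trans (not_le.1 ht)
  have hnt : (n : ℝ) ≤ |t| ^ τ :=
    calc (n : ℝ) ≤ 2 ^ n := by exact_mod_cast (Nat.lt_two_pow_self).le
      _ = (R ^ n) ^ τ := by rw [← Real.rpow_pow_comm hR0.le, hRτ]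
      _ ≤ |t| ^ τ := Real.rpow_le_rpow (by positivity) (not_le.1 ht).le hτ
  rw [sub_zero, Real.rpow_one_add' ht0.le (by linarith)]
  have htn : |t| * n ≤ 2 * R * (1 + |t| * |t| ^ τ) := by
    nlinarith [mul_le_mul_of_nonneg_left hnt ht0.le, mul_nonneg ht0.le (Real.rpow_nonneg ht0.le τ)]
  calc |t| = 1 / n * (|t| * n) := by field_simp
    _ ≤ 1 / n * (2 * R * (1 + |t| * |t| ^ τ)) := by gcongr
    _ = _ := by ring

def piGrid (d : ℕ) (G : Finset ℝ) : Finset (Euc d) :=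
  (Fintype.piFinset fun _ : Fin d => G).map ⟨WithLp.toLp 2, WithLp.toLp_injective 2⟩

lemma card_piGrid (d : ℕ) (G : Finset ℝ) : (piGrid d G).card = G.card ^ d := by
  simp [piGrid]

lemma exists_mem_piGrid_dist_le {d : ℕ} {G : Finset ℝ} {s r : ℝ}
    (hG : ∀ t, |t| ≤ s → ∃ x ∈ G, |t - x| ≤ r) {z : Euc d} (hz : ‖z‖ ≤ s) :
    ∃ g ∈ piGrid d G, dist z g ≤ √d * r := by
  have hcoord : ∀ i, ∃ x ∈ G, |z i - x| ≤ r := fun i =>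
    hG (z i) ((Real.norm_eq_abs _ ▸ PiLp.norm_apply_le z i).trans hz)
  choose x hxG hx using hcoord
  have hr : 0 ≤ r := by
    obtain ⟨y, -, hy⟩ := hG 0 (by simpa using (norm_nonneg z).trans hz)
    exact (abs_nonneg _).trans hy
  refine ⟨WithLp.toLp 2 x, mem_map_of_mem _ (Fintype.mem_piFinset.2 hxG), ?_⟩
  rw [EuclideanSpace.dist_eq]
  calc √(∑ i, dist (z i) (x i) ^ 2) ≤ √(∑ _i : Fin d, r ^ 2) := by
        gcongr with i
        rw [Real.dist_eq]
        exact hx i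
    _ = √d * r := by simp [Real.sqrt_sq hr]

lemma le_one_add_rpow {x τ : ℝ} (hx : 0 ≤ x) (hτ : 0 ≤ τ) : x ≤ 1 + x ^ (1 + τ) := by
  rcases le_total x 1 with h | h
  · linarith [Real.rpow_nonneg hx (1 + τ)]
  · linarith [Real.self_le_rpow_of_one_le h (by linarith : 1 ≤ 1 + τ)]

lemma exists_finset_card_le_pow_dist_le (d : ℕ) {τ : ℝ} (hτ : 0 < τ) :
    ∃ c : ℝ, 0 ≤ c ∧ ∀ n : ℕ, 1 ≤ n → ∃ G : Finset (Euc d), G.card ≤ (10 * n) ^ d ∧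
      ∀ z : Euc d, ∃ g ∈ G, dist z g ≤ c / n * (1 + ‖z‖ ^ (1 + τ)) := by
  set R : ℝ := 2 ^ τ⁻¹
  have hR : 1 < R := Real.one_lt_rpow one_lt_two (inv_pos.2 hτ)
  have hRτ : R ^ τ = 2 := Real.rpow_inv_rpow zero_le_two hτ.ne'
  refine ⟨√d * (2 * R), by positivity, fun n hn => ⟨piGrid d (dyadicGrid R n), ?_, fun z => ?_⟩⟩
  · rw [card_piGrid]
    exact Nat.pow_le_pow_left (card_dyadicGrid_le R hn) d
  have hG : ∀ t, |t| ≤ ‖z‖ → ∃ x ∈ dyadicGrid R n, |t - x| ≤ 2 * R / n * (1 + ‖z‖ ^ (1 + τ)) := by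
    intro t ht
    obtain ⟨x, hx, htx⟩ := exists_mem_dyadicGrid_abs_sub_le hR hRτ hn t
    refine ⟨x, hx, htx.trans ?_⟩
    gcongr
  obtain ⟨g, hg, hzg⟩ := exists_mem_piGrid_dist_le hG le_rfl
  exact ⟨g, hg, hzg.trans_eq (by ring)⟩

lemma exists_finset_card_le_dist_le_rpow {d : ℕ} (hd : 1 ≤ d) {τ : ℝ} (hτ : 0 < τ) :
    ∃ κ : ℝ, 0 ≤ κ ∧ ∀ N : ℕ, 1 ≤ N → ∃ G : Finset (Euc d), G.card ≤ N ∧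
      ∀ z : Euc d, ∃ g ∈ G, dist z g ≤ κ * (N : ℝ) ^ (-(1 / (d : ℝ))) * (1 + ‖z‖ ^ (1 + τ)) := by
  obtain ⟨c, hc, hgrid⟩ := exists_finset_card_le_pow_dist_le d hτ
  refine ⟨20 * (c + 1), by positivity, fun N hN => ?_⟩
  have hN : (1 : ℝ) ≤ N := by exact_mod_cast hN
  set x : ℝ := (N : ℝ) ^ (d : ℝ)⁻¹
  have hx1 : 1 ≤ x := Real.one_le_rpow hN (by positivity)
  have hxN : x ^ d = N := Real.rpow_inv_natCast_pow (by positivity) (by omega)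
  rw [one_div, Real.rpow_neg (by positivity), ← div_eq_mul_inv]
  rcases lt_or_ge x 20 with hx | hx
  · refine ⟨{0}, by simpa using hN, fun z => ⟨0, mem_singleton_self 0, ?_⟩⟩
    rw [dist_zero_right]
    refine (le_one_add_rpow (norm_nonneg z) hτ.le).trans (le_mul_of_one_le_left (by positivity) ?_)
    rw [le_div_iff₀ (by positivity)]
    linarith
  set n := ⌊x / 10⌋₊
  have hn : 1 ≤ n := Nat.le_floor (by push_cast; linarith)
  have hnx : 10 * (n : ℝ) ≤ x := by linarith [Nat.floor_le (by positivity : 0 ≤ x / 10)]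
  have hxn : x ≤ 20 * n := by linarith [Nat.lt_floor_add_one (x / 10)]
  obtain ⟨G, hGcard, hG⟩ := hgrid n hn
  refine ⟨G, hGcard.trans ?_, fun z => ?_⟩
  · rw [← Nat.cast_le (α := ℝ), ← hxN]
    push_cast
    gcongr
  obtain ⟨g, hg, hzg⟩ := hG z
  refine ⟨g, hg, hzg.trans (mul_le_mul_of_nonneg_right ?_ (by positivity))⟩
  rw [div_le_div_iff₀ (by positivity) (by positivity)]
  nlinarith

lemma one_add_rpow_le {u p : ℝ} (hu : 0 ≤ u) (hp : 0 ≤ p) : (1 + u) ^ p ≤ 2 ^ p * (1 + u ^ p) := by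
  have hmax : 1 + u ≤ 2 * max 1 u := by linarith [le_max_left 1 u, le_max_right 1 u]
  calc (1 + u) ^ p ≤ (2 * max 1 u) ^ p := Real.rpow_le_rpow (by positivity) hmax hp
    _ = 2 ^ p * max 1 u ^ p := Real.mul_rpow zero_le_two (hu.trans (le_max_right 1 u))
    _ ≤ 2 ^ p * (1 + u ^ p) := by
        gcongr
        rcases le_total 1 u with h | h
        · rw [max_eq_right h]; linarith
        · rw [max_eq_left h, Real.one_rpow]; linarith [Real.rpow_nonneg hu p]

section Quantization

variable {Ω : Type*} [MeasurableSpace Ω] {P : Measure Ω} {d : ℕ}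

lemma integrable_norm_sub_const_rpow [IsFiniteMeasure P] {E : Type*} [NormedAddCommGroup E]
    {X : Ω → E} {q : ℝ} (hq : 0 < q) (hX : AEStronglyMeasurable X P)
    (hint : Integrable (fun ω => ‖X ω‖ ^ q) P) (a : E) :
    Integrable (fun ω => ‖X ω - a‖ ^ q) P := by
  have hq' : (ENNReal.ofReal q).toReal = q := ENNReal.toReal_ofReal hq.le
  rw [← hq'] at hint ⊢
  have hmem : MemLp X (ENNReal.ofReal q) P :=
    (integrable_norm_rpow_iff hX (by simpa using hq) ENNReal.ofReal_ne_top).1 hint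
  exact (hmem.sub (memLp_const a)).integrable_norm_rpow'

lemma optQuantErrRV_le_quantErrRV (p : ℝ) {N : ℕ} (X : Ω → Euc d) {Γ : Finset (Euc d)}
    (hΓ : Γ.Nonempty) (hcard : Γ.card ≤ N) : optQuantErrRV p N P X ≤ quantErrRV p P X Γ := by
  refine csInf_le ⟨0, ?_⟩ ⟨Γ, hΓ, hcard, rfl⟩
  rintro e ⟨Γ', -, -, rfl⟩
  exact Real.rpow_nonneg (integral_nonneg fun ω => Real.rpow_nonneg Metric.infDist_nonneg _) _

lemma quantErrRV_le_of_integral_le {p B : ℝ} (hp : 0 < p) (hB : 0 ≤ B) {X : Ω → Euc d}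
    {Γ : Finset (Euc d)} (h : ∫ ω, Metric.infDist (X ω) Γ ^ p ∂P ≤ B ^ p) :
    quantErrRV p P X Γ ≤ B := by
  calc quantErrRV p P X Γ ≤ (B ^ p) ^ (1 / p) :=
        Real.rpow_le_rpow (integral_nonneg fun ω => Real.rpow_nonneg Metric.infDist_nonneg _) h
          (by positivity)
    _ = B := by rw [one_div, Real.rpow_rpow_inv hB hp.ne']

variable [IsProbabilityMeasure P]

lemma quantErrRV_image_add_smul_le {p η ε M : ℝ} (hp : 0 < p) (hε : 0 ≤ ε) (hM : 0 < M)
    {X : Ω → Euc d} {a : Euc d} (hint : Integrable (fun ω => ‖X ω - a‖ ^ (p + η)) P)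
    (hmom : ∫ ω, ‖X ω - a‖ ^ (p + η) ∂P ≤ M ^ (p + η)) {G : Finset (Euc d)}
    (hG : ∀ z, ∃ g ∈ G, dist z g ≤ ε * (1 + ‖z‖ ^ (1 + η / p))) :
    quantErrRV p P X (G.image fun g => a + M • g) ≤ (2 ^ (p + 1)) ^ (1 / p) * ε * M := by
  set c := (ε * M) ^ p * 2 ^ p
  have hc : 0 ≤ c := by positivity
  have hpointwise : ∀ ω, Metric.infDist (X ω) ↑(G.image fun g => a + M • g) ^ p
      ≤ c * (1 + (M ^ (p + η))⁻¹ * ‖X ω - a‖ ^ (p + η)) := by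
    intro ω
    set z := M⁻¹ • (X ω - a)
    obtain ⟨g, hg, hzg⟩ := hG z
    have hdist : dist (X ω) (a + M • g) = M * dist z g := by
      rw [dist_eq_norm, dist_eq_norm, ← norm_smul_of_nonneg hM.le, smul_sub,
        smul_inv_smul₀ hM.ne', sub_sub]
    have hz : ‖z‖ ^ (p + η) = (M ^ (p + η))⁻¹ * ‖X ω - a‖ ^ (p + η) := by
      rw [norm_smul, norm_inv, Real.norm_of_nonneg hM.le,
        Real.mul_rpow (by positivity) (norm_nonneg _), Real.inv_rpow hM.le]
    have hinf : Metric.infDist (X ω) ↑(G.image fun g => a + M • g)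
        ≤ ε * M * (1 + ‖z‖ ^ (1 + η / p)) := by
      refine (Metric.infDist_le_dist_of_mem (by simpa using ⟨g, hg, rfl⟩)).trans ?_
      rw [hdist]
      nlinarith [dist_nonneg (x := z) (y := g)]
    calc Metric.infDist (X ω) ↑(G.image fun g => a + M • g) ^ p
        ≤ (ε * M * (1 + ‖z‖ ^ (1 + η / p))) ^ p :=
          Real.rpow_le_rpow Metric.infDist_nonneg hinf hp.le
      _ = (ε * M) ^ p * (1 + ‖z‖ ^ (1 + η / p)) ^ p := Real.mul_rpow (by positivity) (by positivity)
      _ ≤ (ε * M) ^ p * (2 ^ p * (1 + (‖z‖ ^ (1 + η / p)) ^ p)) := by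
          gcongr
          exact one_add_rpow_le (by positivity) hp.le
      _ = c * (1 + (M ^ (p + η))⁻¹ * ‖X ω - a‖ ^ (p + η)) := by
          rw [← Real.rpow_mul (norm_nonneg _), add_mul, one_mul, div_mul_cancel₀ _ hp.ne', hz]
          ring
  have hIM : (M ^ (p + η))⁻¹ * ∫ ω, ‖X ω - a‖ ^ (p + η) ∂P ≤ 1 :=
    inv_mul_le_one_of_le₀ hmom (by positivity)
  apply quantErrRV_le_of_integral_le hp (by positivity)
  calc ∫ ω, Metric.infDist (X ω) ↑(G.image fun g => a + M • g) ^ p ∂P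
      ≤ ∫ ω, c * (1 + (M ^ (p + η))⁻¹ * ‖X ω - a‖ ^ (p + η)) ∂P :=
        integral_mono_of_nonneg (.of_forall fun ω => Real.rpow_nonneg Metric.infDist_nonneg _)
          (((integrable_const 1).add (hint.const_mul _)).const_mul c) (.of_forall hpointwise)
    _ = c * (1 + (M ^ (p + η))⁻¹ * ∫ ω, ‖X ω - a‖ ^ (p + η) ∂P) := by
        rw [integral_const_mul, integral_add (integrable_const 1) (hint.const_mul _),
          integral_const_mul]
        simp
    _ ≤ c * 2 := by gcongr; linarith
    _ = ((2 ^ (p + 1)) ^ (1 / p) * ε * M) ^ p := by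
        rw [mul_assoc _ ε M, Real.mul_rpow (by positivity) (by positivity), one_div,
          Real.rpow_inv_rpow (by positivity) hp.ne', Real.rpow_add zero_lt_two, Real.rpow_one]
        ring

lemma optQuantErrRV_le_of_forall_dist_le {p η ε : ℝ} {N : ℕ} (hp : 0 < p) (hη : 0 ≤ η)
    (hε : 0 ≤ ε) {X : Ω → Euc d} {a : Euc d}
    (hint : Integrable (fun ω => ‖X ω - a‖ ^ (p + η)) P) {G : Finset (Euc d)}
    (hcard : G.card ≤ N) (hG : ∀ z, ∃ g ∈ G, dist z g ≤ ε * (1 + ‖z‖ ^ (1 + η / p))) :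
    optQuantErrRV p N P X
      ≤ (2 ^ (p + 1)) ^ (1 / p) * ε * (∫ ω, ‖X ω - a‖ ^ (p + η) ∂P) ^ (1 / (p + η)) := by
  set I := ∫ ω, ‖X ω - a‖ ^ (p + η) ∂P
  have hI : 0 ≤ I := integral_nonneg fun ω => Real.rpow_nonneg (norm_nonneg _) _
  have hGne : G.Nonempty := let ⟨g, hg, _⟩ := hG 0; ⟨g, hg⟩
  -- the rescaled grid needs `M > 0`, so approach the moment norm from above
  have hlim : Filter.Tendsto (fun M => (2 ^ (p + 1)) ^ (1 / p) * ε * M)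
      (nhdsWithin (I ^ (1 / (p + η))) (Set.Ioi (I ^ (1 / (p + η)))))
      (nhds ((2 ^ (p + 1)) ^ (1 / p) * ε * I ^ (1 / (p + η)))) :=
    ((continuous_const.mul continuous_id).tendsto _).mono_left nhdsWithin_le_nhds
  refine ge_of_tendsto hlim (eventually_nhdsWithin_of_forall fun M hM => ?_)
  have hM0 : 0 < M := (Real.rpow_nonneg hI _).trans_lt hM
  have hmom : I ≤ M ^ (p + η) := by
    calc I = (I ^ (1 / (p + η))) ^ (p + η) := by
          rw [one_div, Real.rpow_inv_rpow hI (by positivity)]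
      _ ≤ M ^ (p + η) := Real.rpow_le_rpow (by positivity) (le_of_lt hM) (by positivity)
  exact (optQuantErrRV_le_quantErrRV p X (hGne.image _) (card_image_le.trans hcard)).trans
    (quantErrRV_image_add_smul_le hp hε hM0 hint hmom hG)

end Quantization

/-- **Pierce's Lemma.** For every dimension `d ≥ 1` and all `p, η > 0` there exists a finite
constant `κ_{d,p,η}` such that for every ℝ^d-valued random vector `X` (with finite
`(p+η)`-moment) on any probability space and every `N ≥ 1`:
`e_{p,N}(X) ≤ κ_{d,p,η} · σ_{p+η}(X) · N^{−1/d}`. -/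
theorem pierce_lemma (d : ℕ) (hd : 1 ≤ d) (p η : ℝ) (hp : 0 < p) (hη : 0 < η) :
    ∃ κ : ℝ, ∀ (Ω : Type) (_ : MeasurableSpace Ω) (P : Measure Ω), IsProbabilityMeasure P →
      ∀ X : Ω → Euc d, Measurable X → Integrable (fun ω => ‖X ω‖ ^ (p + η)) P →
        ∀ N : ℕ, 1 ≤ N →
          optQuantErrRV p N P X ≤ κ * sigmaRV (p + η) P X * (N : ℝ) ^ (-(1 / (d : ℝ))) := by
  obtain ⟨κ, hκ, hgrid⟩ := exists_finset_card_le_dist_le_rpow hd (div_pos hη hp)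
  refine ⟨(2 ^ (p + 1)) ^ (1 / p) * κ, fun Ω _ P _ X hX hint N hN => ?_⟩
  obtain ⟨G, hGcard, hG⟩ := hgrid N hN
  have hε : 0 ≤ κ * (N : ℝ) ^ (-(1 / (d : ℝ))) := by positivity
  have hbound : ∀ a, optQuantErrRV p N P X ≤ (2 ^ (p + 1)) ^ (1 / p) * κ * (N : ℝ) ^ (-(1 / (d : ℝ)))
      * (∫ ω, ‖X ω - a‖ ^ (p + η) ∂P) ^ (1 / (p + η)) := fun a =>
    (optQuantErrRV_le_of_forall_dist_le hp hη.le hε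
      (integrable_norm_sub_const_rpow (by positivity) hX.aestronglyMeasurable hint a)
      hGcard hG).trans_eq (by ring)
  calc optQuantErrRV p N P X
      ≤ (2 ^ (p + 1)) ^ (1 / p) * κ * (N : ℝ) ^ (-(1 / (d : ℝ))) * sigmaRV (p + η) P X := by
        rw [sigmaRV, Real.mul_iInf_of_nonneg (by positivity)]
        exact le_ciInf hbound
    _ = (2 ^ (p + 1)) ^ (1 / p) * κ * sigmaRV (p + η) P X * (N : ℝ) ^ (-(1 / (d : ℝ))) := by ring
end
end

section
/- For every real r ≥ 2 and all u, v ∈ ℝ^d (Euclidean norm |·| and inner product ⟨·,·⟩): |u+v|^r ≤ |u|^r + r|u|^{r−2}⟨u,v⟩ + 2^{(r−3)₊} · (r(r−1)/2) · ( |u|^{r−2}|v|² + |v|^r ), where the term r|u|^{r−2}⟨u,v⟩ is understood to be 0 when u = 0. -/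
open Real Set InnerProductGeometry

/-!
Write `A = ‖u‖`, `B = ‖v‖` and `c = cos (angle u v)`, so that `⟪u, v⟫ = c A B` and
`‖u + v‖² = (1 + c)/2 · (A + B)² + (1 - c)/2 · (A - B)²`. Convexity of `t ↦ t ^ (r / 2)` bounds
`‖u + v‖ ^ r` by the same average of `(A + B) ^ r` and `|A - B| ^ r`, and the right-hand side of the
claim is affine in `c`, so only the collinear cases `c = ±1` remain. These are second-order Taylor
bounds for `t ↦ t ^ r` on `[0, ∞)`, whose remainder `(r(r-1)/2) max(x, y) ^ (r - 2) (y - x)²` is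
split by `(A + B) ^ (r - 2) ≤ 2 ^ (r - 3)₊ (A ^ (r - 2) + B ^ (r - 2))`.
-/

theorem le_taylor_two_of_deriv2_le {g g' g'' : ℝ → ℝ} {a b M : ℝ} (hab : a ≤ b)
    (hg : ∀ t ∈ Icc a b, HasDerivAt g (g' t) t) (hg' : ∀ t ∈ Icc a b, HasDerivAt g' (g'' t) t)
    (hM : ∀ t ∈ Icc a b, g'' t ≤ M) :
    g b ≤ g a + g' a * (b - a) + M / 2 * (b - a) ^ 2 := by
  have hcont {f f' : ℝ → ℝ} (hf : ∀ t ∈ Icc a b, HasDerivAt f (f' t) t) :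
      ContinuousOn f (Icc a b) :=
    fun t ht => (hf t ht).continuousAt.continuousWithinAt
  have hright {f f' : ℝ → ℝ} (hf : ∀ t ∈ Icc a b, HasDerivAt f (f' t) t) :
      ∀ t ∈ Ico a b, HasDerivWithinAt f (f' t) (Ici t) t :=
    fun t ht => (hf t (Ico_subset_Icc_self ht)).hasDerivWithinAt
  have hlin : ∀ t ∈ Icc a b, HasDerivAt (fun s => g' a + M * (s - a)) M t := fun t _ => by
    simpa using ((hasDerivAt_id' t).sub_const a).const_mul M |>.const_add (g' a)
  have hquad : ∀ t ∈ Icc a b,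
      HasDerivAt (fun s => g a + g' a * (s - a) + M / 2 * (s - a) ^ 2) (g' a + M * (t - a)) t :=
    fun t _ => by
      have h := ((hasDerivAt_id' t).sub_const a).const_mul (g' a) |>.const_add (g a) |>.add
        (((hasDerivAt_id' t).sub_const a).pow 2 |>.const_mul (M / 2))
      exact h.congr_deriv (by ring)
  have hslope : ∀ t ∈ Icc a b, g' t ≤ g' a + M * (t - a) :=
    image_le_of_deriv_right_le_deriv_boundary (hcont hg') (hright hg') (by simp) (hcont hlin)
      (hright hlin) fun t ht => hM t (Ico_subset_Icc_self ht)
  exact image_le_of_deriv_right_le_deriv_boundary (hcont hg) (hright hg) (by simp) (hcont hquad)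
    (hright hquad) (fun t ht => hslope t (Ico_subset_Icc_self ht)) (right_mem_Icc.2 hab)

theorem hasDerivAt_lineMap_rpow {p : ℝ} (hp : 1 ≤ p) (x y t : ℝ) :
    HasDerivAt (fun s => (x + s * (y - x)) ^ p) (p * (x + t * (y - x)) ^ (p - 1) * (y - x)) t := by
  have h := ((hasDerivAt_id' t).mul_const (y - x)).const_add x |>.rpow_const (Or.inr hp)
  convert h using 1
  ring

theorem rpow_le_taylor_two {r x y : ℝ} (hr : 2 ≤ r) (hx : 0 ≤ x) (hy : 0 ≤ y) :
    y ^ r ≤ x ^ r + r * x ^ (r - 1) * (y - x)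
      + r * (r - 1) / 2 * max x y ^ (r - 2) * (y - x) ^ 2 := by
  have hg'' : ∀ t ∈ Icc (0 : ℝ) 1, HasDerivAt (fun s => r * (x + s * (y - x)) ^ (r - 1) * (y - x))
      (r * (r - 1) * (x + t * (y - x)) ^ (r - 2) * (y - x) ^ 2) t := fun t _ => by
    have h := (hasDerivAt_lineMap_rpow (by linarith : 1 ≤ r - 1) x y t).const_mul r
      |>.mul_const (y - x)
    refine h.congr_deriv ?_
    rw [show r - 1 - 1 = r - 2 by ring]
    ring
  have hM : ∀ t ∈ Icc (0 : ℝ) 1, r * (r - 1) * (x + t * (y - x)) ^ (r - 2) * (y - x) ^ 2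
      ≤ r * (r - 1) * max x y ^ (r - 2) * (y - x) ^ 2 := fun t ⟨ht0, ht1⟩ => by
    have hlo : 0 ≤ x + t * (y - x) := by nlinarith
    have hhi : x + t * (y - x) ≤ max x y := by nlinarith [le_max_left x y, le_max_right x y]
    gcongr
    nlinarith
  have h := le_taylor_two_of_deriv2_le zero_le_one
    (fun t _ => hasDerivAt_lineMap_rpow (by linarith) x y t) hg'' hM
  simp only [zero_mul, add_zero, one_mul, add_sub_cancel, sub_zero, one_pow, mul_one] at h
  linarith

theorem add_rpow_le_two_rpow_mul_add_rpow {x y q : ℝ} (hx : 0 ≤ x) (hy : 0 ≤ y) (hq : 0 ≤ q) :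
    (x + y) ^ q ≤ 2 ^ max (q - 1) 0 * (x ^ q + y ^ q) := by
  lift x to NNReal using hx
  lift y to NNReal using hy
  rcases le_total q 1 with hq1 | hq1
  · rw [max_eq_right (by linarith), rpow_zero, one_mul]
    exact_mod_cast NNReal.rpow_add_le_add_rpow x y hq hq1
  · rw [max_eq_left (by linarith)]
    exact_mod_cast NNReal.rpow_add_le_mul_rpow_add_rpow x y hq1

theorem half_mul_sub_one_le_two_rpow_mul {r : ℝ} (hr : 1 ≤ r) (q : ℝ) :
    r * (r - 1) / 2 ≤ 2 ^ max q 0 * (r * (r - 1) / 2) :=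
  le_mul_of_one_le_left (by nlinarith) (one_le_rpow one_le_two (le_max_right q 0))

theorem add_rpow_le_taylor {r a b : ℝ} (hr : 2 ≤ r) (ha : 0 ≤ a) (hb : 0 ≤ b) :
    (a + b) ^ r ≤ a ^ r + r * a ^ (r - 1) * b
      + 2 ^ max (r - 3) 0 * (r * (r - 1) / 2) * (a ^ (r - 2) * b ^ (2 : ℝ) + b ^ r) := by
  have htaylor := rpow_le_taylor_two hr ha (add_nonneg ha hb)
  rw [max_eq_right (by linarith), add_sub_cancel_left] at htaylor
  have hsplit := add_rpow_le_two_rpow_mul_add_rpow ha hb (by linarith : 0 ≤ r - 2)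
  rw [show r - 2 - 1 = r - 3 by ring] at hsplit
  have hb_pow : b ^ (r - 2) * b ^ (2 : ℝ) = b ^ r := by
    rw [← rpow_add' hb (by linarith)]
    ring_nf
  calc (a + b) ^ r
      ≤ a ^ r + r * a ^ (r - 1) * b + r * (r - 1) / 2 * (a + b) ^ (r - 2) * b ^ (2 : ℝ) := by
        rwa [rpow_two]
    _ ≤ a ^ r + r * a ^ (r - 1) * b
          + r * (r - 1) / 2 * (2 ^ max (r - 3) 0 * (a ^ (r - 2) + b ^ (r - 2))) * b ^ (2 : ℝ) := by
        gcongr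
        nlinarith
    _ = _ := by rw [← hb_pow]; ring

theorem abs_sub_rpow_le_taylor {r a b : ℝ} (hr : 2 ≤ r) (ha : 0 ≤ a) (hb : 0 ≤ b) :
    |a - b| ^ r ≤ a ^ r - r * a ^ (r - 1) * b
      + 2 ^ max (r - 3) 0 * (r * (r - 1) / 2) * (a ^ (r - 2) * b ^ (2 : ℝ) + b ^ r) := by
  set C := 2 ^ max (r - 3) 0 * (r * (r - 1) / 2)
  have hC : r * (r - 1) / 2 ≤ C := half_mul_sub_one_le_two_rpow_mul (by linarith) (r - 3)
  have hbr : 0 ≤ b ^ r := rpow_nonneg hb r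
  have hC1 : 1 ≤ C := hC.trans' (by nlinarith)
  have har : 0 ≤ a ^ (r - 2) := rpow_nonneg ha _
  rcases le_total b a with hba | hab
  · have htaylor := rpow_le_taylor_two hr ha (sub_nonneg.2 hba)
    rw [max_eq_left (by linarith), sub_sub_cancel_left, neg_sq, ← rpow_two] at htaylor
    rw [abs_of_nonneg (sub_nonneg.2 hba)]
    have h := mul_le_mul_of_nonneg_right hC (mul_nonneg har (rpow_nonneg hb 2))
    nlinarith [mul_nonneg (by linarith : 0 ≤ C) hbr]
  · -- Taylor's expansion around `a` would cross `0`; instead `|a - b| ^ r ≤ b ^ r ≤ C b ^ r`, and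
    -- the rest is `a ^ (r - 2)` times a quadratic form of discriminant at most `r (2 - r) ≤ 0`.
    have hquad : 0 ≤ a ^ 2 - r * a * b + C * b ^ 2 := by
      nlinarith [sq_nonneg (2 * a - r * b), mul_nonneg (by linarith : 0 ≤ r) (sq_nonneg b),
        mul_le_mul_of_nonneg_right hC (sq_nonneg b)]
    have ha_pow : a ^ r = a ^ (r - 2) * a ^ 2 := by
      rw [← rpow_two, ← rpow_add' ha (by linarith)]; ring_nf
    have ha_pow' : a ^ (r - 1) = a ^ (r - 2) * a := by
      rw [← rpow_add_one' ha (by linarith)]; ring_nf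
    have hsub : |a - b| ^ r ≤ b ^ r := by
      rw [abs_sub_comm, abs_of_nonneg (sub_nonneg.2 hab)]
      exact rpow_le_rpow (sub_nonneg.2 hab) (by linarith) (by linarith)
    have hbC : b ^ r ≤ C * b ^ r := le_mul_of_one_le_left hbr hC1
    rw [rpow_two, ha_pow, ha_pow']
    nlinarith [mul_nonneg har hquad]

theorem sq_rpow_div_two_eq_abs_rpow {x : ℝ} (r : ℝ) : (x ^ 2) ^ (r / 2) = |x| ^ r := by
  rw [← sq_abs, ← rpow_natCast_mul (abs_nonneg x)]
  norm_num [mul_div_cancel₀]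

theorem norm_add_rpow_le_cos_angle_average {E : Type*} [NormedAddCommGroup E]
    [InnerProductSpace ℝ E] {r : ℝ} (hr : 2 ≤ r) (u v : E) :
    ‖u + v‖ ^ r ≤ (1 + cos (angle u v)) / 2 * (‖u‖ + ‖v‖) ^ r
      + (1 - cos (angle u v)) / 2 * |‖u‖ - ‖v‖| ^ r := by
  set c := cos (angle u v)
  have hsq : ‖u + v‖ ^ 2 = (1 + c) / 2 * (‖u‖ + ‖v‖) ^ 2 + (1 - c) / 2 * (‖u‖ - ‖v‖) ^ 2 := by
    rw [norm_add_sq_real, ← cos_angle_mul_norm_mul_norm]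
    ring
  have h := (convexOn_rpow (by linarith : 1 ≤ r / 2)).2 (mem_Ici.2 (sq_nonneg (‖u‖ + ‖v‖)))
    (mem_Ici.2 (sq_nonneg (‖u‖ - ‖v‖))) (by linarith [neg_one_le_cos (angle u v)] : 0 ≤ (1 + c) / 2)
    (by linarith [cos_le_one (angle u v)] : 0 ≤ (1 - c) / 2) (by ring)
  simp only [smul_eq_mul, ← hsq, sq_rpow_div_two_eq_abs_rpow, abs_norm] at h
  rwa [abs_of_nonneg (by positivity : 0 ≤ ‖u‖ + ‖v‖)] at h

/-- For every real `r ≥ 2` and all `u, v ∈ ℝ^d` (Euclidean norm and inner product):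
`|u+v|^r ≤ |u|^r + r|u|^{r−2}⟨u,v⟩ + 2^{(r−3)₊}·(r(r−1)/2)·(|u|^{r−2}|v|² + |v|^r)`,
the middle term being `0` when `u = 0`. -/
theorem norm_add_rpow_taylor_inequality (d : ℕ) (r : ℝ) (hr : 2 ≤ r)
    (u v : EuclideanSpace ℝ (Fin d)) :
    ‖u + v‖ ^ r ≤ ‖u‖ ^ r + r * ‖u‖ ^ (r - 2) * (inner ℝ u v : ℝ)
      + 2 ^ (max (r - 3) 0) * (r * (r - 1) / 2)
        * (‖u‖ ^ (r - 2) * ‖v‖ ^ (2 : ℝ) + ‖v‖ ^ r) := by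
  set c := cos (angle u v)
  have hpow : ‖u‖ ^ (r - 1) * ‖v‖ = ‖u‖ ^ (r - 2) * (‖u‖ * ‖v‖) := by
    rw [← mul_assoc, ← rpow_add_one' (norm_nonneg u) (by linarith)]
    ring_nf
  calc ‖u + v‖ ^ r
      ≤ (1 + c) / 2 * (‖u‖ + ‖v‖) ^ r + (1 - c) / 2 * |‖u‖ - ‖v‖| ^ r :=
        norm_add_rpow_le_cos_angle_average hr u v
    _ ≤ (1 + c) / 2 * (‖u‖ ^ r + r * ‖u‖ ^ (r - 1) * ‖v‖
          + 2 ^ max (r - 3) 0 * (r * (r - 1) / 2) * (‖u‖ ^ (r - 2) * ‖v‖ ^ (2 : ℝ) + ‖v‖ ^ r))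
        + (1 - c) / 2 * (‖u‖ ^ r - r * ‖u‖ ^ (r - 1) * ‖v‖
          + 2 ^ max (r - 3) 0 * (r * (r - 1) / 2) * (‖u‖ ^ (r - 2) * ‖v‖ ^ (2 : ℝ) + ‖v‖ ^ r)) := by
        have hc₁ : 0 ≤ (1 + c) / 2 := by linarith [neg_one_le_cos (angle u v)]
        have hc₂ : 0 ≤ (1 - c) / 2 := by linarith [cos_le_one (angle u v)]
        gcongr
        · exact add_rpow_le_taylor hr (norm_nonneg u) (norm_nonneg v)
        · exact abs_sub_rpow_le_taylor hr (norm_nonneg u) (norm_nonneg v)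
    _ = _ := by
        rw [← cos_angle_mul_norm_mul_norm]
        linear_combination (c * r) * hpow
end

section
/- For every real r ≥ 2, all α, β ≥ 0 and every ε > 0: (α+β)^r ≤ α^r ( 1 + (r−1)·2^{r−2}·ε^r ) + 2^{r−2}·β^r·( r + ε^{−r(r−1)} ). -/
/-!
Convexity of `x ↦ x ^ r` bounds `(α + β) ^ r` by `α ^ r + r β (α + β) ^ (r - 1)`; the power-mean
inequality splits `(α + β) ^ (r - 1) ≤ 2 ^ (r - 2) (α ^ (r - 1) + β ^ (r - 1))`, and the mixed term
`α ^ (r - 1) β` is absorbed by Young's inequality with a weight `ε`.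
-/

namespace Real

lemma rpow_add_le_two_rpow_mul_add_rpow {a b p : ℝ} (ha : 0 ≤ a) (hb : 0 ≤ b) (hp : 1 ≤ p) :
    (a + b) ^ p ≤ 2 ^ (p - 1) * (a ^ p + b ^ p) := by
  lift a to NNReal using ha
  lift b to NNReal using hb
  exact_mod_cast NNReal.rpow_add_le_mul_rpow_add_rpow a b hp

/-- Bernoulli's inequality for `a / (a + b)`, rescaled by `(a + b) ^ p`. -/
lemma rpow_add_le_rpow_add_mul_mul_rpow_sub_one {a b p : ℝ} (ha : 0 ≤ a) (hb : 0 ≤ b)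
    (hp : 1 ≤ p) : (a + b) ^ p ≤ a ^ p + p * b * (a + b) ^ (p - 1) := by
  rcases (add_nonneg ha hb).eq_or_lt with hs | hs
  · obtain ⟨rfl, rfl⟩ := (add_eq_zero_iff_of_nonneg ha hb).1 hs.symm
    simp [zero_rpow (by linarith : p ≠ 0)]
  set s := a + b
  have hbernoulli : 1 + p * (a / s - 1) ≤ (a / s) ^ p :=
    one_add_mul_self_le_rpow_one_add (by linarith [div_nonneg ha hs.le]) hp |>.trans_eq
      (by rw [add_sub_cancel])
  have hscale : (a / s) ^ p * s ^ p = a ^ p := by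
    rw [← mul_rpow (div_nonneg ha hs.le) hs.le, div_mul_cancel₀ _ hs.ne']
  have hsp : s ^ p = s ^ (p - 1) * s := by
    rw [← rpow_add_one hs.ne', sub_add_cancel]
  have hlin : (1 + p * (a / s - 1)) * s ^ p = s ^ p - p * b * s ^ (p - 1) := by
    rw [hsp]; field_simp; ring
  nlinarith [mul_le_mul_of_nonneg_right hbernoulli (rpow_nonneg hs.le p)]

/-- Young's inequality with exponents `p / (p - 1)` and `p`, applied to `(ε a) ^ (p - 1)` and
`ε ^ (1 - p) b`. -/
lemma young_inequality_rpow_sub_one_mul {a b p ε : ℝ} (ha : 0 ≤ a) (hb : 0 ≤ b) (hp : 1 < p)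
    (hε : 0 < ε) :
    a ^ (p - 1) * b ≤ (p - 1) / p * (ε ^ p * a ^ p) + ε ^ (-(p * (p - 1))) * b ^ p / p := by
  have hp1 : p - 1 ≠ 0 := by linarith
  have hconj : (p / (p - 1)).HolderConjugate p := (HolderConjugate.conjExponent hp).symm
  have hεa := mul_nonneg hε.le ha
  have hyoung := young_inequality_of_nonneg (rpow_nonneg hεa (p - 1))
    (mul_nonneg (rpow_nonneg hε.le (-(p - 1))) hb) hconj
  have hprod : (ε * a) ^ (p - 1) * (ε ^ (-(p - 1)) * b) = a ^ (p - 1) * b := by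
    rw [mul_rpow hε.le ha, mul_mul_mul_comm, ← rpow_add hε, add_neg_cancel, rpow_zero, one_mul]
  have hfirst : ((ε * a) ^ (p - 1)) ^ (p / (p - 1)) / (p / (p - 1))
      = (p - 1) / p * (ε ^ p * a ^ p) := by
    rw [← rpow_mul hεa, mul_div_cancel₀ _ hp1, mul_rpow hε.le ha]
    field_simp
  have hsecond : (ε ^ (-(p - 1)) * b) ^ p = ε ^ (-(p * (p - 1))) * b ^ p := by
    rw [mul_rpow (rpow_nonneg hε.le _) hb, ← rpow_mul hε.le, neg_mul, mul_comm (p - 1)]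
  rwa [hprod, hfirst, hsecond] at hyoung

end Real

open Real

/-- For every real `r ≥ 2`, all `α, β ≥ 0` and every `ε > 0`:
`(α+β)^r ≤ α^r (1 + (r−1)·2^{r−2}·ε^r) + 2^{r−2}·β^r·(r + ε^{−r(r−1)})`. -/
theorem young_type_power_inequality (r α β ε : ℝ) (hr : 2 ≤ r) (hα : 0 ≤ α) (hβ : 0 ≤ β)
    (hε : 0 < ε) :
    (α + β) ^ r ≤ α ^ r * (1 + (r - 1) * 2 ^ (r - 2) * ε ^ r)
      + 2 ^ (r - 2) * β ^ r * (r + ε ^ (-(r * (r - 1)))) := by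
  have hpow : (α + β) ^ (r - 1) ≤ 2 ^ (r - 2) * (α ^ (r - 1) + β ^ (r - 1)) := by
    convert rpow_add_le_two_rpow_mul_add_rpow hα hβ (by linarith : 1 ≤ r - 1) using 3
    ring
  have hβr : β ^ (r - 1) * β = β ^ r := by
    rw [← rpow_add_one' hβ (by linarith), sub_add_cancel]
  calc (α + β) ^ r ≤ α ^ r + r * β * (α + β) ^ (r - 1) :=
        rpow_add_le_rpow_add_mul_mul_rpow_sub_one hα hβ (by linarith)
    _ ≤ α ^ r + r * β * (2 ^ (r - 2) * (α ^ (r - 1) + β ^ (r - 1))) := by gcongr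
    _ = α ^ r + r * 2 ^ (r - 2) * (α ^ (r - 1) * β) + r * 2 ^ (r - 2) * β ^ r := by
        rw [← hβr]; ring
    _ ≤ α ^ r + r * 2 ^ (r - 2) * ((r - 1) / r * (ε ^ r * α ^ r)
          + ε ^ (-(r * (r - 1))) * β ^ r / r) + r * 2 ^ (r - 2) * β ^ r := by
        gcongr
        exact young_inequality_rpow_sub_one_mul hα hβ (by linarith) hε
    _ = _ := by field_simp; ring
end
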